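/- (Theorem 2, with the paper's O(γ²)·f(x*) term made explicit as γ²·f(x*) per iteration) Let P ⊆ X be a nonempty compact down-closed convex set with diameter at most D; let f : ℝⁿ → ℝ be nonnegative on X, DR-submodular on X, and differentiable on X with L-Lipschitz gradient; let x* be a maximizer of f over P. Run the non-monotone Frank-Wolfe variant with uniform step size γ ∈ (0, 1/2]. Then for every k ≥ 0 with kγ ≤ 1: f(x⁽ᵏ⁾) ≥ kγ·e^{−kγ}·f(x*) − kγ²·(L·D²/2 + f(x*)). -/

import Mathlib

open scoped RealInnerProductSpace

noncomputable section

/-- `ℝⁿ` with the Euclidean norm. -/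
abbrev E (n : ℕ) := EuclideanSpace ℝ (Fin n)

/-- membership in the box `X = {x : 0 ≤ x ≤ ub}` (componentwise). -/
def inBox {n : ℕ} (ub x : E n) : Prop := ∀ i, 0 ≤ x i ∧ x i ≤ ub i

/-- DR-submodularity on the box `[0, ub]`. -/
def DRSubmodular {n : ℕ} (ub : E n) (f : E n → ℝ) : Prop :=
  ∀ a b : E n, inBox ub a → inBox ub b → (∀ i, a i ≤ b i) →
    ∀ (i : Fin n) (k : ℝ), 0 ≤ k →
      inBox ub (a + k • EuclideanSpace.single i 1) →
      inBox ub (b + k • EuclideanSpace.single i 1) →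
      f (a + k • EuclideanSpace.single i 1) - f a ≥
        f (b + k • EuclideanSpace.single i 1) - f b

/-- a set is down-closed. -/
def DownClosed {n : ℕ} (P : Set (E n)) : Prop :=
  ∀ x ∈ P, ∀ y : E n, (∀ i, 0 ≤ y i) → (∀ i, y i ≤ x i) → y ∈ P

open Filter Set
lemma hasDerivAt_line {n : ℕ} (f : E n → ℝ) (p d : E n) (t : ℝ)
    (h : DifferentiableAt ℝ f (p + t • d)) :
    HasDerivAt (fun s : ℝ => f (p + s • d)) ⟪gradient f (p + t • d), d⟫ t := by
  have h1 : HasDerivAt (fun s : ℝ => p + s • d) d t := by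
    simpa using ((hasDerivAt_id t).smul_const d).const_add p
  have h2 := (h.hasGradientAt.hasFDerivAt).comp_hasDerivAt t h1
  exact h2.congr_deriv (by simp)

lemma addMul_apply {n : ℕ} (a : E n) (t : ℝ) (i j : Fin n) :
    (a + t • EuclideanSpace.single i (1:ℝ)) j = a j + (if j = i then t else 0) := by
  simp [EuclideanSpace.single_apply, mul_ite]

lemma grad_mono {n : ℕ} (ub : E n) (f : E n → ℝ)
    (hDR : DRSubmodular ub f) (hdiff : ∀ w, inBox ub w → DifferentiableAt ℝ f w)
    (a b : E n) (ha : inBox ub a) (hb : inBox ub b) (hab : ∀ i, a i ≤ b i)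
    (i : Fin n) (hbi : b i < ub i) :
    gradient f b i ≤ gradient f a i := by
  set e : E n := EuclideanSpace.single i (1:ℝ) with he
  have key : ∀ p : E n, inBox ub p → gradient f p i = ⟪gradient f p, e⟫ := by
    intro p hp
    rw [he]
    rw [EuclideanSpace.inner_single_right]
    simp [mul_comm]
  -- derivative facts
  have da : HasDerivAt (fun s : ℝ => f (a + s • e)) ⟪gradient f a, e⟫ 0 := by
    have := hasDerivAt_line f a e 0 (by simpa using hdiff a ha)
    simpa using this
  have db : HasDerivAt (fun s : ℝ => f (b + s • e)) ⟪gradient f b, e⟫ 0 := by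
    have := hasDerivAt_line f b e 0 (by simpa using hdiff b hb)
    simpa using this
  have ta := hasDerivAt_iff_tendsto_slope.mp da
  have tb := hasDerivAt_iff_tendsto_slope.mp db
  have hmono : nhdsWithin (0:ℝ) (Ioi 0) ≤ nhdsWithin 0 {(0:ℝ)}ᶜ :=
    nhdsWithin_mono 0 (fun t ht => by simpa using (ne_of_gt ht))
  have ta' := ta.mono_left hmono
  have tb' := tb.mono_left hmono
  rw [key a ha, key b hb]
  refine le_of_tendsto_of_tendsto tb' ta' ?_
  have hmem : Ioo (0:ℝ) (ub i - b i) ∈ nhdsWithin (0:ℝ) (Ioi 0) :=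
    Ioo_mem_nhdsGT_of_mem (by constructor <;> [rfl; linarith])
  filter_upwards [hmem] with t ht
  have ht0 : 0 < t := ht.1
  have htub : t < ub i - b i := ht.2
  have boxb : inBox ub (b + t • e) := by
    intro j
    rw [he, addMul_apply]
    rcases eq_or_ne j i with rfl | hji
    · simp only [if_pos rfl, if_true]
      constructor
      · have := (hb j).1; linarith
      · linarith
    · simp only [if_neg hji, add_zero]; exact hb j
  have boxa : inBox ub (a + t • e) := by
    intro j
    rw [he, addMul_apply]
    rcases eq_or_ne j i with rfl | hji
    · simp only [if_pos rfl, if_true]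
      constructor
      · have := (ha j).1; linarith
      · have := hab j; linarith
    · simp only [if_neg hji, add_zero]; exact ha j
  have hDRt := hDR a b ha hb hab i t (le_of_lt ht0) boxa boxb
  have hsa : slope (fun s : ℝ => f (a + s • e)) 0 t = (f (a + t • e) - f a) / t := by
    rw [slope_def_field]; simp
  have hsb : slope (fun s : ℝ => f (b + s • e)) 0 t = (f (b + t • e) - f b) / t := by
    rw [slope_def_field]; simp
  rw [hsa, hsb]
  exact (div_le_div_iff_of_pos_right ht0).mpr hDRt

lemma inner_grad_mono {n : ℕ} (ub : E n) (f : E n → ℝ)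
    (hDR : DRSubmodular ub f) (hdiff : ∀ w, inBox ub w → DifferentiableAt ℝ f w)
    (a b d : E n) (ha : inBox ub a) (hb : inBox ub b) (hab : ∀ i, a i ≤ b i)
    (hd : ∀ i, 0 ≤ d i) (hslack : ∀ i, 0 < d i → b i < ub i) :
    ⟪gradient f b, d⟫ ≤ ⟪gradient f a, d⟫ := by
  rw [PiLp.inner_apply, PiLp.inner_apply]
  apply Finset.sum_le_sum
  intro i _
  rcases eq_or_lt_of_le (hd i) with h0 | hpos
  · simp [← h0]
  · have := grad_mono ub f hDR hdiff a b ha hb hab i (hslack i hpos)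
    simp only [RCLike.inner_apply, conj_trivial]
    exact mul_le_mul_of_nonneg_left this (hd i)

-- box membership along a segment
lemma inBox_segment {n : ℕ} (ub : E n) (p q : E n) (hp : inBox ub p) (hq : inBox ub q)
    (t : ℝ) (ht0 : 0 ≤ t) (ht1 : t ≤ 1) : inBox ub (p + t • (q - p)) := by
  intro i
  have h1 := (hp i).1; have h2 := (hp i).2; have h3 := (hq i).1; have h4 := (hq i).2
  have : (p + t • (q - p)) i = (1 - t) * p i + t * q i := by
    simp [PiLp.add_apply, PiLp.smul_apply, PiLp.sub_apply]; ring
  rw [this]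
  constructor
  · nlinarith
  · nlinarith

lemma concave_upper {n : ℕ} (ub : E n) (f : E n → ℝ)
    (hDR : DRSubmodular ub f) (hdiff : ∀ w, inBox ub w → DifferentiableAt ℝ f w)
    (x z : E n) (hx : inBox ub x) (hz : inBox ub z) (hxz : ∀ i, x i ≤ z i) :
    f z - f x ≤ ⟪gradient f x, z - x⟫ := by
  set d : E n := z - x with hd
  have hbox : ∀ t : ℝ, 0 ≤ t → t ≤ 1 → inBox ub (x + t • d) := fun t h0 h1 =>
    inBox_segment ub x z hx hz t h0 h1
  have hderiv : ∀ t ∈ Set.Ioo (0:ℝ) 1,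
      HasDerivAt (fun s : ℝ => f (x + s • d)) ⟪gradient f (x + t • d), d⟫ t := fun t ht =>
    hasDerivAt_line f x d t (hdiff _ (hbox t ht.1.le ht.2.le))
  have hcont : ContinuousOn (fun s : ℝ => f (x + s • d)) (Set.Icc 0 1) := by
    intro t ht
    exact (hasDerivAt_line f x d t (hdiff _ (hbox t ht.1 ht.2))).continuousAt.continuousWithinAt
  obtain ⟨c, hc, hceq⟩ := exists_hasDerivAt_eq_slope (fun s : ℝ => f (x + s • d))
    (fun t => ⟪gradient f (x + t • d), d⟫) (by norm_num : (0:ℝ) < 1) hcont hderiv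
  have h10 : f (x + (1:ℝ) • d) = f z := by rw [hd]; norm_num
  have h00 : f (x + (0:ℝ) • d) = f x := by norm_num
  rw [h10, h00] at hceq
  have hle : ⟪gradient f (x + c • d), d⟫ ≤ ⟪gradient f x, d⟫ := by
    apply inner_grad_mono ub f hDR hdiff x (x + c • d) d hx (hbox c hc.1.le hc.2.le)
    · intro i
      have : d i = z i - x i := by simp [hd]
      have h := hxz i
      simp only [PiLp.add_apply, PiLp.smul_apply, smul_eq_mul, this]
      nlinarith [hc.1]
    · intro i; simp [hd]; linarith [hxz i]
    · intro i hdi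
      have : (x + c • d) i = x i + c * d i := by simp
      rw [this]
      have hdz : d i = z i - x i := by simp [hd]
      have := (hz i).2
      nlinarith [hc.2, hdi]
  calc f z - f x = ⟪gradient f (x + c • d), d⟫ := by rw [hceq]; ring
    _ ≤ ⟪gradient f x, d⟫ := hle

lemma lem_nonmono {n : ℕ} (ub : E n) (f : E n → ℝ)
    (hnn : ∀ w, inBox ub w → 0 ≤ f w)
    (hDR : DRSubmodular ub f) (hdiff : ∀ w, inBox ub w → DifferentiableAt ℝ f w)
    (y z : E n) (θ : ℝ) (hθ0 : 0 < θ) (hθ1 : θ ≤ 1)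
    (hy : inBox ub y) (hyz : ∀ i, y i ≤ z i)
    (hzb : ∀ i, z i ≤ y i + θ * (ub i - y i)) :
    (1 - θ) * f y ≤ f z := by
  have hz : inBox ub z := by
    intro i
    have h1 := (hy i).1; have h2 := (hy i).2; have h3 := hyz i; have h4 := hzb i
    constructor
    · linarith
    · nlinarith
  rcases eq_or_lt_of_le hθ1 with rfl | hθlt
  · have := hnn z hz; linarith
  -- θ < 1 case
  set d : E n := z - y with hd
  set T : ℝ := 1/θ with hT
  have hT1 : 1 < T := by rw [hT]; rw [lt_div_iff₀ hθ0]; linarith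
  -- the far endpoint is in the box
  have hwbox : ∀ t : ℝ, 0 ≤ t → t ≤ T → inBox ub (y + t • d) := by
    intro t h0 h1 i
    have h2 := (hy i).1; have h3 := (hy i).2; have h4 := hyz i; have h5 := hzb i
    have happ : (y + t • d) i = y i + t * (z i - y i) := by simp [hd]
    rw [happ]
    constructor
    · nlinarith
    · -- y i + t (z i - y i) ≤ y i + T θ (ub i - y i) = ub i
      have ht : t * (z i - y i) ≤ T * (θ * (ub i - y i)) := by
        apply mul_le_mul h1 (by linarith) (by linarith) (by positivity)
      have : T * (θ * (ub i - y i)) = ub i - y i := by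
        rw [hT]; field_simp
      linarith [ht.trans_eq this]
  have hderiv : ∀ t ∈ Set.Icc (0:ℝ) T,
      HasDerivAt (fun s : ℝ => f (y + s • d)) ⟪gradient f (y + t • d), d⟫ t := fun t ht =>
    hasDerivAt_line f y d t (hdiff _ (hwbox t ht.1 ht.2))
  have hcont : ContinuousOn (fun s : ℝ => f (y + s • d)) (Set.Icc 0 T) := fun t ht =>
    (hderiv t ht).continuousAt.continuousWithinAt
  obtain ⟨c₁, hc₁, heq₁⟩ := exists_hasDerivAt_eq_slope (fun s : ℝ => f (y + s • d))
    (fun t => ⟪gradient f (y + t • d), d⟫) (by norm_num : (0:ℝ) < 1)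
    (hcont.mono (Set.Icc_subset_Icc le_rfl hT1.le))
    (fun t ht => hderiv t ⟨ht.1.le, ht.2.le.trans hT1.le⟩)
  obtain ⟨c₂, hc₂, heq₂⟩ := exists_hasDerivAt_eq_slope (fun s : ℝ => f (y + s • d))
    (fun t => ⟪gradient f (y + t • d), d⟫) hT1
    (hcont.mono (Set.Icc_subset_Icc (by norm_num) le_rfl))
    (fun t ht => hderiv t ⟨(by linarith [ht.1] : (0:ℝ) ≤ t), ht.2.le⟩)
  -- derivative comparison
  have hdmono : ⟪gradient f (y + c₂ • d), d⟫ ≤ ⟪gradient f (y + c₁ • d), d⟫ := by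
    apply inner_grad_mono ub f hDR hdiff _ _ d
      (hwbox c₁ hc₁.1.le (hc₁.2.le.trans hT1.le)) (hwbox c₂ (by linarith [hc₂.1]) hc₂.2.le)
    · intro i
      have h4 := hyz i
      have : c₁ ≤ c₂ := by linarith [hc₁.2, hc₂.1]
      simp only [PiLp.add_apply, PiLp.smul_apply, smul_eq_mul, hd, PiLp.sub_apply]
      nlinarith
    · intro i; simp [hd]; linarith [hyz i]
    · intro i hdi
      have hdz : d i = z i - y i := by simp [hd]
      rw [hdz] at hdi
      have happ : (y + c₂ • d) i = y i + c₂ * (z i - y i) := by simp [hd]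
      rw [happ]
      have h5 := hzb i
      have h2 := (hy i).2
      -- y i + c₂ (z i - y i) < y i + T (z i - y i) ≤ ub i
      have hTub : y i + T * (z i - y i) ≤ ub i := by
        have ht : T * (z i - y i) ≤ T * (θ * (ub i - y i)) := by
          apply mul_le_mul_of_nonneg_left (by linarith) (by positivity)
        have heq : T * (θ * (ub i - y i)) = ub i - y i := by rw [hT]; field_simp
        linarith [ht.trans_eq heq]
      nlinarith [hc₂.2]
  -- algebra
  have hy0 : y + (0:ℝ) • d = y := by simp
  have hz1 : y + (1:ℝ) • d = z := by rw [hd]; simp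
  rw [hy0, hz1] at heq₁
  rw [hz1] at heq₂
  have hTnn : 0 ≤ f (y + T • d) := hnn _ (hwbox T (by linarith) le_rfl)
  rw [heq₁, heq₂] at hdmono
  norm_num at hdmono
  have hT1' : 0 < T - 1 := by linarith
  have step1 : f (y + T • d) - f z ≤ (f z - f y) * (T - 1) :=
    (div_le_iff₀ hT1').mp hdmono
  rw [hT] at step1
  have step2 := mul_le_mul_of_nonneg_left step1 hθ0.le
  have hfs : θ * ((f z - f y) * (1/θ - 1)) = (f z - f y) * (1 - θ) := by
    field_simp
  rw [hfs] at step2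
  nlinarith [mul_nonneg hθ0.le hTnn, step2]

lemma descent {n : ℕ} (ub : E n) (f : E n → ℝ) (L : ℝ)
    (hdiff : ∀ w, inBox ub w → DifferentiableAt ℝ f w)
    (hLip : ∀ a b, inBox ub a → inBox ub b →
      ‖gradient f a - gradient f b‖ ≤ L * ‖a - b‖)
    (x d : E n) (c : ℝ) (hc0 : 0 ≤ c) (hc1 : c ≤ 1)
    (hx : inBox ub x) (hxd : inBox ub (x + d)) :
    f x + c * ⟪gradient f x, d⟫ - L * c^2 * ‖d‖^2 / 2 ≤ f (x + c • d) := by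
  have hbox : ∀ t : ℝ, 0 ≤ t → t ≤ 1 → inBox ub (x + t • d) := by
    intro t h0 h1
    have := inBox_segment ub x (x + d) hx hxd t h0 h1
    simpa using this
  set G : ℝ := ⟪gradient f x, d⟫ with hG
  set χ : ℝ → ℝ := fun t => f (x + t • d) - t * G + L * ‖d‖^2 * t^2 / 2 with hχ
  have hd : ∀ t : ℝ, 0 ≤ t → t ≤ 1 →
      HasDerivAt χ (⟪gradient f (x + t • d), d⟫ - G + L * ‖d‖^2 * t) t := by
    intro t h0 h1
    have h₁ : HasDerivAt (fun s : ℝ => f (x + s • d)) ⟪gradient f (x + t • d), d⟫ t :=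
      hasDerivAt_line f x d t (hdiff _ (hbox t h0 h1))
    have h₂ : HasDerivAt (fun s : ℝ => s * G) G t := by
      simpa using (hasDerivAt_id t).mul_const G
    have h₃ : HasDerivAt (fun s : ℝ => L * ‖d‖^2 * s^2 / 2) (L * ‖d‖^2 * t) t := by
      have := ((hasDerivAt_pow 2 t).const_mul (L * ‖d‖^2)).div_const 2
      refine this.congr_deriv ?_
      push_cast
      ring
    exact (h₁.sub h₂).add h₃
  have hmono : MonotoneOn χ (Set.Icc 0 c) := by
    apply monotoneOn_of_deriv_nonneg (convex_Icc 0 c)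
    · intro t ht
      exact (hd t ht.1 (ht.2.trans hc1)).continuousAt.continuousWithinAt
    · intro t ht
      rw [interior_Icc] at ht
      exact (hd t ht.1.le (ht.2.le.trans hc1)).differentiableAt.differentiableWithinAt
    · intro t ht
      rw [interior_Icc] at ht
      rw [(hd t ht.1.le (ht.2.le.trans hc1)).deriv]
      have hip : ⟪gradient f (x + t • d) - gradient f x, d⟫ ≥
          -(L * (t * ‖d‖) * ‖d‖) := by
        have h1 : |⟪gradient f (x + t • d) - gradient f x, d⟫| ≤
            ‖gradient f (x + t • d) - gradient f x‖ * ‖d‖ := abs_real_inner_le_norm _ _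
        have h2 : ‖gradient f (x + t • d) - gradient f x‖ ≤ L * ‖(x + t • d) - x‖ :=
          hLip _ _ (hbox t ht.1.le (ht.2.le.trans hc1)) hx
        have h3 : ‖(x + t • d) - x‖ = t * ‖d‖ := by
          simp [norm_smul, abs_of_nonneg ht.1.le]
        rw [h3] at h2
        have := neg_abs_le ⟪gradient f (x + t • d) - gradient f x, d⟫
        nlinarith [norm_nonneg d, abs_nonneg ⟪gradient f (x + t • d) - gradient f x, d⟫]
      have hsub : ⟪gradient f (x + t • d) - gradient f x, d⟫ =
          ⟪gradient f (x + t • d), d⟫ - G := by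
        rw [hG, inner_sub_left]
      nlinarith [hip, hsub]
  have := hmono (Set.left_mem_Icc.mpr hc0) (Set.right_mem_Icc.mpr hc0) hc0
  simp only [hχ] at this
  simp only [zero_smul, add_zero, zero_mul, zero_pow, mul_zero, sub_zero] at this
  nlinarith [this]

lemma scalarA (γ : ℝ) (k : ℕ) (hγ0 : 0 < γ) (hγ1 : γ ≤ 1/2) (hk : 1 ≤ k)
    (hkγ : (k:ℝ) * γ ≤ 1) :
    Real.exp (-((k:ℝ) * γ)) - γ ≤ (1 - γ) ^ (k - 1) := by
  have h1γ : 0 < 1 - γ := by linarith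
  have hstep : Real.exp (-(γ + 2*γ^2)) ≤ 1 - γ := by
    have h1 : 1 + γ/(1-γ) ≤ Real.exp (γ/(1-γ)) := by
      have := Real.add_one_le_exp (γ/(1-γ)); linarith
    have h2 : 1/(1-γ) = 1 + γ/(1-γ) := by field_simp; ring
    have h3 : Real.exp (-(γ/(1-γ))) ≤ 1 - γ := by
      rw [Real.exp_neg]
      rw [inv_le_comm₀ (Real.exp_pos _) h1γ]
      rw [inv_eq_one_div, h2]; exact h1
    have h4 : γ/(1-γ) ≤ γ + 2*γ^2 := by
      rw [div_le_iff₀ h1γ]; nlinarith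
    exact le_trans (Real.exp_le_exp.mpr (by linarith)) h3
  have hpow : Real.exp (-(γ + 2*γ^2)) ^ (k-1) ≤ (1-γ) ^ (k-1) :=
    pow_le_pow_left₀ (Real.exp_pos _).le hstep _
  have hexp : Real.exp (-(γ + 2*γ^2)) ^ (k-1) =
      Real.exp (-(((k:ℝ)-1) * (γ + 2*γ^2))) := by
    rw [← Real.exp_nat_mul]
    congr 1
    have : ((k-1 : ℕ) : ℝ) = (k:ℝ) - 1 := by
      rw [Nat.cast_sub hk]; norm_num
    rw [this]; ring
  have hexpo : -((k:ℝ)*γ) - γ ≤ -(((k:ℝ)-1) * (γ + 2*γ^2)) := by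
    have hk1 : ((k:ℝ)-1) * γ ≤ 1 := by
      have : (1:ℝ) ≤ (k:ℝ) := by exact_mod_cast hk
      nlinarith
    nlinarith [mul_nonneg (sub_nonneg.mpr (show (1:ℝ) ≤ (k:ℝ) by exact_mod_cast hk)) (sq_nonneg γ)]
  have h5 : Real.exp (-((k:ℝ)*γ) - γ) ≤ (1-γ)^(k-1) := by
    calc Real.exp (-((k:ℝ)*γ) - γ) ≤ Real.exp (-(((k:ℝ)-1) * (γ + 2*γ^2))) :=
          Real.exp_le_exp.mpr hexpo
      _ = Real.exp (-(γ + 2*γ^2)) ^ (k-1) := hexp.symm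
      _ ≤ (1-γ)^(k-1) := hpow
  have h6 : Real.exp (-((k:ℝ)*γ)) - γ ≤ Real.exp (-((k:ℝ)*γ) - γ) := by
    rw [Real.exp_sub]
    have he1 : Real.exp (-((k:ℝ)*γ)) ≤ 1 := by
      rw [Real.exp_le_one_iff]
      have : (0:ℝ) ≤ (k:ℝ)*γ := by positivity
      linarith
    have he2 : 1 - γ ≤ Real.exp (-γ) := by
      have := Real.add_one_le_exp (-γ); linarith
    have hp := Real.exp_pos (-((k:ℝ)*γ))
    calc Real.exp (-((k:ℝ)*γ)) - γ ≤ Real.exp (-((k:ℝ)*γ)) * (1-γ) := by nlinarith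
      _ ≤ Real.exp (-((k:ℝ)*γ)) * Real.exp (-γ) := by nlinarith
      _ = Real.exp (-((k:ℝ)*γ)) / Real.exp γ := by rw [Real.exp_neg, Real.exp_neg]; ring
  linarith

set_option maxHeartbeats 1000000

/-- Theorem 2, with the `O(γ²)·f(x*)` term made explicit as `γ²·f(x*)` per iteration. -/
theorem stmt8 {n : ℕ} (hn : 1 ≤ n) (ub : E n) (hub : ∀ i, 0 < ub i)
    (P : Set (E n)) (hPX : ∀ p ∈ P, inBox ub p) (hPne : P.Nonempty)
    (hPcp : IsCompact P) (hPcv : Convex ℝ P) (hPdc : DownClosed P)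
    (D : ℝ) (hD : ∀ a ∈ P, ∀ b ∈ P, ‖a - b‖ ≤ D)
    (f : E n → ℝ) (L : ℝ)
    (hnn : ∀ w, inBox ub w → 0 ≤ f w)
    (hDR : DRSubmodular ub f)
    (hdiff : ∀ w, inBox ub w → DifferentiableAt ℝ f w)
    (hLip : ∀ a b, inBox ub a → inBox ub b →
      ‖gradient f a - gradient f b‖ ≤ L * ‖a - b‖)
    (xs : E n) (hxs : xs ∈ P) (hmax : ∀ w ∈ P, f w ≤ f xs)
    (γ : ℝ) (hγ0 : 0 < γ) (hγ1 : γ ≤ 1 / 2)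
    (x v : ℕ → E n)
    (h0 : x 0 = 0)
    (hrec : ∀ k, x (k + 1) = x k + γ • v k)
    (hvfeas : ∀ k, v k ∈ P ∧ ∀ i, v k i ≤ ub i - x k i)
    (hvopt : ∀ k, ∀ w ∈ P, (∀ i, w i ≤ ub i - x k i) →
      ⟪w, gradient f (x k)⟫ ≤ ⟪v k, gradient f (x k)⟫) :
    ∀ k : ℕ, (k : ℝ) * γ ≤ 1 →
      f (x k) ≥ (k : ℝ) * γ * Real.exp (-((k : ℝ) * γ)) * f xs
        - (k : ℝ) * γ ^ 2 * (L * D ^ 2 / 2 + f xs) := by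
  have h1γ : 0 < 1 - γ := by linarith
  have hvbox : ∀ k, inBox ub (v k) := fun k => hPX _ (hvfeas k).1
  -- bounds on the iterates
  have hxk : ∀ k, ∀ i, 0 ≤ x k i ∧ x k i ≤ (1 - (1-γ)^k) * ub i := by
    intro k
    induction k with
    | zero => intro i; rw [h0]; norm_num
    | succ m ih =>
      intro i
      have happ : x (m+1) i = x m i + γ * v m i := by rw [hrec m]; simp
      have h1 := (ih i).1; have h2 := (ih i).2
      have h3 := (hvbox m i).1
      have h4 := ((hvfeas m).2) i
      have h5 := hub i
      have hpw : (0:ℝ) ≤ (1-γ)^m := by positivity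
      constructor
      · rw [happ]; nlinarith
      · rw [happ]
        have : (1 - (1-γ)^(m+1)) * ub i = (1-γ) * ((1 - (1-γ)^m) * ub i) + γ * ub i := by
          rw [pow_succ]; ring
        nlinarith
  have hxbox : ∀ k, inBox ub (x k) := by
    intro k i
    have h1 := (hxk k i).1; have h2 := (hxk k i).2
    have h5 := hub i
    have hpw : (0:ℝ) ≤ (1-γ)^k := by positivity
    exact ⟨h1, by nlinarith⟩
  have hxsbox : inBox ub xs := hPX xs hxs
  have h0P : (0 : E n) ∈ P := by
    apply hPdc xs hxs 0 (fun i => le_rfl) (fun i => (hxsbox i).1)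
  have hD0 : 0 ≤ D := by
    have := hD xs hxs xs hxs; simp at this; exact this
  have hnormv : ∀ k, ‖v k‖ ≤ D := by
    intro k
    have := hD (v k) (hvfeas k).1 0 h0P
    simpa using this
  have hL0 : 0 ≤ L := by
    have hubbox : inBox ub ub := fun i => ⟨(hub i).le, le_rfl⟩
    have h0box : inBox ub 0 := fun i => ⟨le_rfl, (hub i).le⟩
    have hl := hLip ub 0 hubbox h0box
    have hubne : ub ≠ 0 := by
      intro h
      have i : Fin n := ⟨0, hn⟩
      have := hub i
      rw [h] at this
      simp at this
    have : (0:ℝ) < ‖ub - 0‖ := by simpa [sub_zero] using norm_pos_iff.mpr hubne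
    nlinarith [norm_nonneg (gradient f ub - gradient f 0)]
  set C : ℝ := L * γ^2 * D^2 / 2 with hC
  have hC0 : 0 ≤ C := by rw [hC]; positivity
  have hF0 : 0 ≤ f xs := hnn xs hxsbox
  -- key recursion
  have hkey : ∀ k, (1-γ) * f (x k) + γ * (1-γ)^k * f xs - C ≤ f (x (k+1)) := by
    intro k
    set z : E n := WithLp.toLp 2 fun i => max (x k i) (xs i) with hz
    have hzapp : ∀ i, z i = max (x k i) (xs i) := fun i => rfl
    have hzbox : inBox ub z := by
      intro i
      rw [hzapp]
      exact ⟨le_max_of_le_left (hxbox k i).1, max_le (hxbox k i).2 (hxsbox i).2⟩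
    set v' : E n := z - x k with hv'
    have hv'app : ∀ i, v' i = z i - x k i := by intro i; rw [hv']; simp
    have hv'P : v' ∈ P := by
      apply hPdc xs hxs
      · intro i; rw [hv'app, hzapp]; simp [le_max_left]
      · intro i
        rw [hv'app, hzapp]
        rcases max_cases (x k i) (xs i) with ⟨h, _⟩ | ⟨h, _⟩ <;> rw [h]
        · linarith [(hxsbox i).1]
        · linarith [(hxbox k i).1]
    have hv'ub : ∀ i, v' i ≤ ub i - x k i := by
      intro i; rw [hv'app, hzapp]
      have := max_le (hxbox k i).2 (hxsbox i).2
      linarith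
    -- step A : descent
    have hxvbox : inBox ub (x k + v k) := by
      intro i
      have h1 := (hxbox k i).1; have h2 := (hvbox k i).1
      have h3 := ((hvfeas k).2) i
      constructor
      · simp only [PiLp.add_apply]; linarith
      · simp only [PiLp.add_apply]; linarith
    have hA := descent ub f L hdiff hLip (x k) (v k) γ hγ0.le (by linarith)
      (hxbox k) hxvbox
    rw [← hrec k] at hA
    -- step B : optimality
    have hB := hvopt k v' hv'P hv'ub
    have hB' : ⟪gradient f (x k), v'⟫ ≤ ⟪gradient f (x k), v k⟫ := by
      calc ⟪gradient f (x k), v'⟫ = ⟪v', gradient f (x k)⟫ := real_inner_comm _ _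
        _ ≤ ⟪v k, gradient f (x k)⟫ := hB
        _ = ⟪gradient f (x k), v k⟫ := real_inner_comm _ _
    -- step C : concavity upper bound
    have hxz : ∀ i, x k i ≤ z i := fun i => by rw [hzapp]; exact le_max_left _ _
    have hCC0 := concave_upper ub f hDR hdiff (x k) z (hxbox k) hzbox hxz
    have hCC : f z - f (x k) ≤ ⟪gradient f (x k), v'⟫ := by rw [hv']; exact hCC0
    -- step D : non-monotone lemma
    have hDD : (1-γ)^k * f xs ≤ f z := by
      rcases Nat.eq_zero_or_pos k with rfl | hkpos
      · have : z = xs := by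
          ext i
          rw [hzapp, h0]
          simp [max_eq_right (hxsbox i).1]
        rw [this]; norm_num
      · set θ : ℝ := 1 - (1-γ)^k with hθ
        have hpw : (0:ℝ) ≤ (1-γ)^k := by positivity
        have hpw1 : (1-γ)^k < 1 := by
          apply pow_lt_one₀ (by linarith) (by linarith) (by omega)
        have hθ0 : 0 < θ := by rw [hθ]; linarith
        have hθ1 : θ ≤ 1 := by rw [hθ]; linarith
        have := lem_nonmono ub f hnn hDR hdiff xs z θ hθ0 hθ1 hxsbox
          (fun i => by rw [hzapp]; exact le_max_right _ _)
          (by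
            intro i
            rw [hzapp]
            apply max_le
            · have h2 := (hxk k i).2
              have h6 := (hxsbox i).1
              have h7 := (hxsbox i).2
              have : x k i ≤ θ * ub i := by rw [hθ]; linarith
              nlinarith [hθ1, hθ0.le]
            · have h7 := (hxsbox i).2
              nlinarith [hθ0.le])
        rw [hθ] at this
        linarith
    -- combine
    have hvD : ‖v k‖^2 ≤ D^2 := by nlinarith [norm_nonneg (v k), hnormv k]
    have hq : L * γ^2 * ‖v k‖^2 / 2 ≤ C := by
      rw [hC]
      have := mul_le_mul_of_nonneg_left hvD (mul_nonneg hL0 (sq_nonneg γ))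
      calc L * γ^2 * ‖v k‖^2 / 2 = L * γ^2 * ‖v k‖^2 / 2 := rfl
        _ ≤ L * γ^2 * D^2 / 2 := by linarith
    linarith [hA, hq, mul_le_mul_of_nonneg_left hB' hγ0.le,
      mul_le_mul_of_nonneg_left hCC hγ0.le, mul_le_mul_of_nonneg_left hDD hγ0.le]
  -- induction
  have hind : ∀ k : ℕ, (k:ℝ) * γ * (1-γ)^(k-1) * f xs - (k:ℝ) * C ≤ f (x k) := by
    intro k
    induction k with
    | zero => simp [h0]; exact hnn 0 (fun i => ⟨le_rfl, (hub i).le⟩)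
    | succ m ih =>
      have hkm := hkey m
      have hcast : ((m+1 : ℕ) : ℝ) = (m:ℝ) + 1 := by push_cast; ring
      have hpow : (1-γ) * ((m:ℝ) * γ * (1-γ)^(m-1)) = (m:ℝ) * γ * (1-γ)^m := by
        cases m with
        | zero => norm_num
        | succ mm =>
          have hsub : mm + 1 - 1 = mm := rfl
          rw [hsub, pow_succ]
          ring
      have ih' := mul_le_mul_of_nonneg_left ih h1γ.le
      have e1 : (1-γ) * ((m:ℝ)*γ*(1-γ)^(m-1)*f xs - (m:ℝ)*C)
          = (m:ℝ)*γ*(1-γ)^m*f xs - (1-γ)*((m:ℝ)*C) := by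
        rw [← hpow]; ring
      rw [e1] at ih'
      have hmC : (1-γ) * ((m:ℝ) * C) ≤ (m:ℝ)*C := by
        nlinarith [mul_nonneg (Nat.cast_nonneg m : (0:ℝ) ≤ (m:ℝ)) hC0, hγ0]
      have hgoal : ((m:ℝ)+1) * γ * (1-γ)^(m+1-1) * f xs - ((m:ℝ)+1) * C ≤ f (x (m+1)) := by
        have hsimp : (m+1-1 : ℕ) = m := rfl
        rw [hsimp]
        linarith [ih', hkm, hmC]
      rw [hcast]
      exact hgoal
  -- final
  intro k hkγ
  rcases Nat.eq_zero_or_pos k with rfl | hkpos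
  · simp [h0]
    exact hnn 0 (fun i => ⟨le_rfl, (hub i).le⟩)
  · have hsc := scalarA γ k hγ0 hγ1 hkpos hkγ
    have h1 := hind k
    have hkγ0 : (0:ℝ) ≤ (k:ℝ) * γ * f xs := by positivity
    have hmul := mul_le_mul_of_nonneg_left hsc hkγ0
    have hCeq : (k:ℝ) * C = (k:ℝ) * γ^2 * (L * D^2 / 2) := by rw [hC]; ring
    linarith [hmul, h1, hCeq.le, hCeq.ge]
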